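/- For all n, m ≥ 0, the sum of the total groves of degrees n and m is the total grove of degree n+m; that is, ⋃_{x ∈ Y_n, y ∈ Y_m} { z ∈ Y_{n+m} : x/y ≤ z ≤ x\y } = Y_{n+m}. -/

import Mathlib

/-!
Tamari moves preserve the degree and `deg (x / y) = deg x + deg y`, so `x + y ⊆ Y (deg x + deg y)`.
Conversely, cut `z` along the path from its root to its `i`-th leaf: the subtrees hanging to the left
of the path form a tree `x` of degree `i`, those hanging to the right form a tree `y`, and rotations
along that path lead from `x / y` to `z` and from `z` to `x \ y`, so `z ∈ x + y`.
-/

/-- A planar binary tree: a leaf `|` or a grafting `x ∨ y`. -/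
inductive PBT : Type
  | leaf : PBT
  | node : PBT → PBT → PBT
  deriving DecidableEq

namespace PBT

/-- The degree: number of internal vertices. -/
def deg : PBT → ℕ
  | leaf => 0
  | node l r => deg l + deg r + 1

/-- The set `Y n` of planar binary trees of degree `n`. -/
def Y (n : ℕ) : Set PBT := {t | t.deg = n}

/-- The `over` operation `x / y`. -/
def overT : PBT → PBT → PBT
  | x, leaf => x
  | x, node yl yr => node (overT x yl) yr

/-- The `under` operation `x \ y`. -/
def under : PBT → PBT → PBT
  | leaf, y => y
  | node xl xr, y => node xl (under xr y)

/-- The Tamari order, generated by `(x ∨ y) ∨ z ≤ x ∨ (y ∨ z)` and compatibility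
with grafting on both sides. -/
inductive tle : PBT → PBT → Prop
  | refl (x : PBT) : tle x x
  | trans {x y z : PBT} : tle x y → tle y z → tle x z
  | rotate (x y z : PBT) : tle (node (node x y) z) (node x (node y z))
  | node_left {x y : PBT} (z : PBT) : tle x y → tle (node x z) (node y z)
  | node_right {x y : PBT} (z : PBT) : tle x y → tle (node z x) (node z y)

/-- The sum of two planar binary trees: the Tamari interval `[x/y, x\y]`
(a subset of `Y (deg x + deg y)`). -/
def sum (x y : PBT) : Set PBT := {z | tle (overT x y) z ∧ tle z (under x y)}

/-- A grove of degree `n`: a nonempty subset of `Y n`. -/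
def Grove (n : ℕ) (A : Set PBT) : Prop := A.Nonempty ∧ ∀ x ∈ A, x.deg = n

/-- The sum of groves. -/
def gsum (A B : Set PBT) : Set PBT := ⋃ x ∈ A, ⋃ y ∈ B, sum x y

/-- The reflection involution σ. -/
def σ : PBT → PBT
  | leaf => leaf
  | node l r => node (σ r) (σ l)

/-- The left sum `x ⊣ y` of trees (with the conventions `x ⊣ | = {x}`, `| ⊣ y = {|}`). -/
def lsum : PBT → PBT → Set PBT
  | x, leaf => {x}
  | leaf, _ => {leaf}
  | node xl xr, y => (fun z => node xl z) '' sum xr y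

/-- The right sum `x ⊢ y` of trees (with the conventions `| ⊢ y = {y}`, `x ⊢ | = {|}`). -/
def rsum : PBT → PBT → Set PBT
  | leaf, y => {y}
  | _, leaf => {leaf}
  | x, node yl yr => (fun z => node z yr) '' sum x yl

/-- Left sum of groves. -/
def glsum (A B : Set PBT) : Set PBT := ⋃ x ∈ A, ⋃ y ∈ B, lsum x y

/-- Right sum of groves. -/
def grsum (A B : Set PBT) : Set PBT := ⋃ x ∈ A, ⋃ y ∈ B, rsum x y

/-- Multiplication of a tree by a grove:
`| × B = {|}` and `(xˡ ∨ xʳ) × B = ((xˡ × B) ⊢ B) ⊣ (xʳ × B)`.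
(The conventions `{|} ⊢ B = B` and `A ⊣ {|} = A` are built into `rsum`/`lsum`.) -/
def tmul : PBT → Set PBT → Set PBT
  | leaf, _ => {leaf}
  | node l r, B => glsum (grsum (tmul l B) B) (tmul r B)

/-- Multiplication of groves. -/
def gmul (A B : Set PBT) : Set PBT := ⋃ x ∈ A, tmul x B

theorem tle.deg_eq {a b : PBT} (h : tle a b) : deg a = deg b := by
  induction h with
  | refl => rfl
  | trans _ _ ih₁ ih₂ => exact ih₁.trans ih₂
  | rotate => simp only [deg]; omega
  | node_left _ _ ih => simp only [deg, ih]
  | node_right _ _ ih => simp only [deg, ih]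

theorem deg_overT (x y : PBT) : deg (overT x y) = deg x + deg y := by
  induction y with
  | leaf => rfl
  | node yl yr ih _ => simp only [overT, deg, ih]; omega

theorem deg_of_mem_sum {x y z : PBT} (h : z ∈ sum x y) : deg z = deg x + deg y :=
  h.1.deg_eq ▸ deg_overT x y

theorem tle_overT_node (a b c : PBT) : tle (overT (node a b) c) (node a (overT b c)) := by
  induction c with
  | leaf => exact tle.refl _
  | node cl cr ih _ => exact tle.trans (tle.node_left cr ih) (tle.rotate a (overT b cl) cr)

theorem tle_node_under (a b c : PBT) : tle (node (under a b) c) (under a (node b c)) := by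
  induction a generalizing b with
  | leaf => exact tle.refl _
  | node al ar _ ih => exact tle.trans (tle.rotate al (under ar b) c) (tle.node_right al (ih b))

/-- Cuts a tree along the path from the root to its `i`-th leaf (counted from `0`). -/
def split : PBT → ℕ → PBT × PBT
  | leaf, _ => (leaf, leaf)
  | node l r, i =>
    if i ≤ deg l then ((split l i).1, node (split l i).2 r)
    else (node l (split r (i - deg l - 1)).1, (split r (i - deg l - 1)).2)

theorem deg_split_add (z : PBT) (i : ℕ) : deg (split z i).1 + deg (split z i).2 = deg z := by
  induction z generalizing i with
  | leaf => rfl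
  | node l r ihl ihr =>
    by_cases h : i ≤ deg l <;> simp only [split, h, if_true, if_false, deg]
    · have := ihl i; omega
    · have := ihr (i - deg l - 1); omega

theorem deg_split_fst {z : PBT} {i : ℕ} (h : i ≤ deg z) : deg (split z i).1 = i := by
  induction z generalizing i with
  | leaf => simp only [deg, Nat.le_zero] at h; subst h; rfl
  | node l r ihl ihr =>
    simp only [deg] at h
    by_cases hi : i ≤ deg l <;> simp only [split, hi, if_true, if_false, deg]
    · exact ihl hi
    · have := ihr (i := i - deg l - 1) (by omega); omega

theorem mem_sum_split (z : PBT) (i : ℕ) : z ∈ sum (split z i).1 (split z i).2 := by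
  induction z generalizing i with
  | leaf => exact ⟨tle.refl _, tle.refl _⟩
  | node l r ihl ihr =>
    by_cases h : i ≤ deg l <;> simp only [split, h, if_true, if_false]
    · obtain ⟨hover, hunder⟩ := ihl i
      exact ⟨tle.node_left r hover, tle.trans (tle.node_left r hunder) (tle_node_under _ _ r)⟩
    · obtain ⟨hover, hunder⟩ := ihr (i - deg l - 1)
      exact ⟨tle.trans (tle_overT_node l _ _) (tle.node_right l hover), tle.node_right l hunder⟩

end PBT

open PBT in
/-- `⋃_{x ∈ Y_n, y ∈ Y_m} (x + y) = Y_{n+m}`. -/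
theorem total_grove_add (n m : ℕ) :
    (⋃ x ∈ Y n, ⋃ y ∈ Y m, PBT.sum x y) = Y (n + m) := by
  ext z
  simp only [Set.mem_iUnion, Y, Set.mem_ofPred_eq]
  constructor
  · rintro ⟨x, rfl, y, rfl, hz⟩
    exact deg_of_mem_sum hz
  · intro hz
    have hfst : deg (split z n).1 = n := deg_split_fst (by omega)
    have hsnd : deg (split z n).2 = m := by have := deg_split_add z n; omega
    exact ⟨_, hfst, _, hsnd, mem_sum_split z n⟩
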